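/- arXiv:1610.06726 — 3 statements merged into one kernel-verified Lean document; each statement's English description precedes it below -/
import Mathlib

section
/- Let X be a metric space and let α ∈ (0,1]. Let g : ℝ → ℝ be twice differentiable with g, g', g'' bounded, and let u, v : X → ℝ be bounded with finite Hölder seminorms [u]_{C^α}, [v]_{C^α}. Then there is a universal constant C (for instance C = 2 works) such that ‖g ∘ u − g ∘ v‖_{C^α} ≤ C ‖g‖_{C^2} (1 + ‖u‖_{C^α} + ‖v‖_{C^α}) ‖u − v‖_{C^α}. -/
open scoped ENNReal

/-- The sup norm `sup_x |f x|`, valued in `ℝ≥0∞`. -/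
noncomputable def supN {X : Type*} (f : X → ℝ) : ℝ≥0∞ :=
  ⨆ x, ENNReal.ofReal |f x|

/-- The Hölder seminorm `[f]_{C^α} = sup_{x ≠ y} |f x - f y| / d(x,y)^α`, valued in `ℝ≥0∞`. -/
noncomputable def hSemi {X : Type*} [MetricSpace X] (α : ℝ) (f : X → ℝ) : ℝ≥0∞ :=
  ⨆ (x : X) (y : X) (_ : x ≠ y), ENNReal.ofReal (|f x - f y| / dist x y ^ α)

/-- The Hölder norm `‖f‖_{C^α} = sup_x |f x| + [f]_{C^α}`. -/
noncomputable def hNorm {X : Type*} [MetricSpace X] (α : ℝ) (f : X → ℝ) : ℝ≥0∞ :=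
  supN f + hSemi α f

/-- The `C^2` norm of `g : ℝ → ℝ`: `sup |g| + sup |g'| + sup |g''|`. -/
noncomputable def c2Norm (g : ℝ → ℝ) : ℝ≥0∞ :=
  supN g + supN (deriv g) + supN (deriv (deriv g))

/-!
Write `w = u - v`. Inserting `g(v y + w x) - g(v y)` splits the second difference
`(g(u x) - g(v x)) - (g(u y) - g(v y))` into the increment of `s ↦ g(s + w x) - g(s)` between
`v y` and `v x`, at most `sup|g''| |w x| |v x - v y|` by the mean value theorem, and
`g(v y + w x) - g(v y + w y)`, at most `sup|g'| |w x - w y|`. Together with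
`|g(u x) - g(v x)| ≤ sup|g'| |w x|` this gives
`‖g ∘ u - g ∘ v‖_{C^α} ≤ ‖g‖_{C^2} (1 + ‖v‖_{C^α}) ‖u - v‖_{C^α}`.
-/

section Norms

variable {Y X : Type*} [MetricSpace X] {α : ℝ} {f : X → ℝ} {C : ℝ≥0∞}

lemma supN_eq_iSup_enorm (f : Y → ℝ) : supN f = ⨆ x, ‖f x‖ₑ := by
  simp only [supN, Real.enorm_eq_ofReal_abs]

lemma enorm_le_supN (f : Y → ℝ) (x : Y) : ‖f x‖ₑ ≤ supN f :=
  (supN_eq_iSup_enorm f).symm ▸ le_iSup (fun x => ‖f x‖ₑ) x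

lemma supN_le {f : Y → ℝ} (h : ∀ x, ‖f x‖ₑ ≤ C) : supN f ≤ C :=
  (supN_eq_iSup_enorm f).symm ▸ iSup_le h

lemma ofReal_dist_rpow_pos {x y : X} (hxy : x ≠ y) : 0 < ENNReal.ofReal (dist x y ^ α) :=
  ENNReal.ofReal_pos.2 (Real.rpow_pos_of_pos (dist_pos.2 hxy) α)

lemma ofReal_hoelderQuotient_le_iff {x y : X} (hxy : x ≠ y) :
    ENNReal.ofReal (|f x - f y| / dist x y ^ α) ≤ C ↔
      ‖f x - f y‖ₑ ≤ C * ENNReal.ofReal (dist x y ^ α) := by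
  rw [ENNReal.ofReal_div_of_pos (Real.rpow_pos_of_pos (dist_pos.2 hxy) α),
    ← Real.enorm_eq_ofReal_abs,
    ENNReal.div_le_iff (ofReal_dist_rpow_pos hxy).ne' ENNReal.ofReal_ne_top]

lemma enorm_sub_le_hSemi_mul (α : ℝ) (f : X → ℝ) {x y : X} (hxy : x ≠ y) :
    ‖f x - f y‖ₑ ≤ hSemi α f * ENNReal.ofReal (dist x y ^ α) :=
  (ofReal_hoelderQuotient_le_iff hxy).1 <|
    le_iSup_of_le x <| le_iSup_of_le y <| le_iSup_of_le hxy le_rfl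

lemma hSemi_le (h : ∀ x y, x ≠ y → ‖f x - f y‖ₑ ≤ C * ENNReal.ofReal (dist x y ^ α)) :
    hSemi α f ≤ C :=
  iSup_le fun x => iSup_le fun y => iSup_le fun hxy =>
    (ofReal_hoelderQuotient_le_iff hxy).2 (h x y hxy)

end Norms

section MeanValue

variable {g : ℝ → ℝ}

lemma enorm_sub_le_of_enorm_deriv_le (hg : Differentiable ℝ g) {C : ℝ≥0∞}
    (hC : ∀ t, ‖deriv g t‖ₑ ≤ C) (p q : ℝ) : ‖g p - g q‖ₑ ≤ C * ‖p - q‖ₑ := by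
  induction C with
  | top =>
    rcases eq_or_ne p q with rfl | hpq
    · simp
    · simp [ENNReal.top_mul, sub_ne_zero.2 hpq]
  | coe c =>
    rw [← edist_eq_enorm_sub, ← edist_eq_enorm_sub]
    exact lipschitzWith_of_nnnorm_deriv_le hg (fun t => enorm_le_coe.1 (hC t)) p q

lemma enorm_sub_le_supN_deriv_mul (hg : Differentiable ℝ g) (p q : ℝ) :
    ‖g p - g q‖ₑ ≤ supN (deriv g) * ‖p - q‖ₑ :=
  enorm_sub_le_of_enorm_deriv_le hg (enorm_le_supN _) p q

lemma enorm_sub_sub_sub_le (hg : Differentiable ℝ g) (hg' : Differentiable ℝ (deriv g))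
    (a b c d : ℝ) :
    ‖(g (a + b) - g a) - (g (c + d) - g c)‖ₑ ≤
      supN (deriv g) * ‖b - d‖ₑ + supN (deriv (deriv g)) * ‖b‖ₑ * ‖a - c‖ₑ := by
  have hshift : ∀ s, HasDerivAt (fun s => g (s + b) - g s) (deriv g (s + b) - deriv g s) s :=
    fun s => ((hg (s + b)).hasDerivAt.comp_add_const s b).sub (hg s).hasDerivAt
  have hincr : ‖(g (a + b) - g a) - (g (c + b) - g c)‖ₑ ≤
      supN (deriv (deriv g)) * ‖b‖ₑ * ‖a - c‖ₑ :=
    enorm_sub_le_of_enorm_deriv_le (fun s => (hshift s).differentiableAt)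
      (fun s => by
        simpa only [(hshift s).deriv, add_sub_cancel_left] using
          enorm_sub_le_supN_deriv_mul hg' (s + b) s) a c
  have hslope : ‖g (c + b) - g (c + d)‖ₑ ≤ supN (deriv g) * ‖b - d‖ₑ := by
    simpa only [add_sub_add_left_eq_sub] using enorm_sub_le_supN_deriv_mul hg (c + b) (c + d)
  calc ‖(g (a + b) - g a) - (g (c + d) - g c)‖ₑ
      = ‖((g (a + b) - g a) - (g (c + b) - g c)) + (g (c + b) - g (c + d))‖ₑ := by
        congr 1; ring
    _ ≤ _ := (enorm_add_le _ _).trans (by rw [add_comm]; exact add_le_add hslope hincr)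

lemma supN_comp_sub_comp_le {Y : Type*} (u v : Y → ℝ) (hg : Differentiable ℝ g) :
    supN (fun x => g (u x) - g (v x)) ≤ supN (deriv g) * supN (fun x => u x - v x) :=
  supN_le fun x => (enorm_sub_le_supN_deriv_mul hg (u x) (v x)).trans <| by
    gcongr; exact enorm_le_supN (fun x => u x - v x) x

end MeanValue

section Composition

variable {X : Type*} [MetricSpace X] {g : ℝ → ℝ} (α : ℝ) (u v : X → ℝ)

lemma hSemi_comp_sub_comp_le (hg : Differentiable ℝ g) (hg' : Differentiable ℝ (deriv g)) :
    hSemi α (fun x => g (u x) - g (v x)) ≤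
      supN (deriv g) * hSemi α (fun x => u x - v x) +
        supN (deriv (deriv g)) * supN (fun x => u x - v x) * hSemi α v := by
  refine hSemi_le fun x y hxy => ?_
  have hdiff := enorm_sub_sub_sub_le hg hg' (v x) (u x - v x) (v y) (u y - v y)
  simp only [add_sub_cancel] at hdiff
  refine hdiff.trans ?_
  calc supN (deriv g) * ‖u x - v x - (u y - v y)‖ₑ +
        supN (deriv (deriv g)) * ‖u x - v x‖ₑ * ‖v x - v y‖ₑ
      ≤ supN (deriv g) * (hSemi α (fun x => u x - v x) * ENNReal.ofReal (dist x y ^ α)) +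
        supN (deriv (deriv g)) * supN (fun x => u x - v x) *
          (hSemi α v * ENNReal.ofReal (dist x y ^ α)) := by
        gcongr
        · exact enorm_sub_le_hSemi_mul α (fun x => u x - v x) hxy
        · exact enorm_le_supN (fun x => u x - v x) x
        · exact enorm_sub_le_hSemi_mul α v hxy
    _ = _ := by ring

lemma supN_deriv_le_c2Norm (g : ℝ → ℝ) : supN (deriv g) ≤ c2Norm g :=
  le_add_self.trans le_self_add

lemma supN_deriv_deriv_le_c2Norm (g : ℝ → ℝ) : supN (deriv (deriv g)) ≤ c2Norm g :=
  le_add_self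

theorem hNorm_comp_sub_comp_le (hg : Differentiable ℝ g) (hg' : Differentiable ℝ (deriv g)) :
    hNorm α (fun x => g (u x) - g (v x)) ≤
      c2Norm g * (1 + hNorm α v) * hNorm α (fun x => u x - v x) := by
  calc hNorm α (fun x => g (u x) - g (v x))
      ≤ supN (deriv g) * supN (fun x => u x - v x) +
          (supN (deriv g) * hSemi α (fun x => u x - v x) +
            supN (deriv (deriv g)) * supN (fun x => u x - v x) * hSemi α v) :=
        add_le_add (supN_comp_sub_comp_le u v hg) (hSemi_comp_sub_comp_le α u v hg hg')
    _ = supN (deriv g) * hNorm α (fun x => u x - v x) +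
          supN (deriv (deriv g)) * supN (fun x => u x - v x) * hSemi α v := by
        rw [hNorm]; ring
    _ ≤ c2Norm g * hNorm α (fun x => u x - v x) +
          c2Norm g * hNorm α (fun x => u x - v x) * hNorm α v := by
        gcongr
        · exact supN_deriv_le_c2Norm g
        · exact supN_deriv_deriv_le_c2Norm g
        · exact le_self_add
        · exact le_add_self
    _ = c2Norm g * (1 + hNorm α v) * hNorm α (fun x => u x - v x) := by ring

end Composition

theorem stmt_1_general {X : Type*} [MetricSpace X] (α : ℝ)
    (g : ℝ → ℝ) (hg : Differentiable ℝ g) (hg' : Differentiable ℝ (deriv g))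
    (u v : X → ℝ) :
    hNorm α (fun x => g (u x) - g (v x)) ≤
      2 * c2Norm g * (1 + hNorm α u + hNorm α v) * hNorm α (fun x => u x - v x) := by
  calc hNorm α (fun x => g (u x) - g (v x))
      ≤ c2Norm g * (1 + hNorm α v) * hNorm α (fun x => u x - v x) :=
        hNorm_comp_sub_comp_le α u v hg hg'
    _ ≤ 2 * c2Norm g * (1 + hNorm α u + hNorm α v) * hNorm α (fun x => u x - v x) := by
        gcongr
        · exact le_mul_of_one_le_left' one_le_two
        · exact le_self_add

theorem stmt_1 {X : Type*} [MetricSpace X] (α : ℝ) (hα0 : 0 < α) (hα1 : α ≤ 1)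
    (g : ℝ → ℝ) (hg : Differentiable ℝ g) (hg' : Differentiable ℝ (deriv g))
    (hgb : supN g < ⊤) (hg'b : supN (deriv g) < ⊤) (hg''b : supN (deriv (deriv g)) < ⊤)
    (u v : X → ℝ) (hub : supN u < ⊤) (huh : hSemi α u < ⊤)
    (hvb : supN v < ⊤) (hvh : hSemi α v < ⊤) :
    hNorm α (fun x => g (u x) - g (v x)) ≤
      2 * c2Norm g * (1 + hNorm α u + hNorm α v) * hNorm α (fun x => u x - v x) :=
  stmt_1_general α g hg hg' u v
end

section
/- Let X be a metric space, let 0 < β ≤ α ≤ 1 and T ∈ (0,1]. Let g : ℝ → ℝ be differentiable with g and g' bounded, and let u : [0,T] × X → ℝ satisfy ‖u‖_{𝒞^α_T} < ∞. Then there is a constant C depending only on α and β such that ‖g ∘ u‖_{𝒞^β_T} ≤ C ( T^{(α−β)/2} ‖g‖_{C^1} (1 + ‖u‖_{𝒞^α_T}) + ‖g(u(0,·))‖_{C^β} ). -/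
/-!
Write `v = g ∘ u`, `L = sup |g'|`, `P = ‖u‖_{𝒞^α_T}`, `H = ‖g(u(0,·))‖_{C^β}` and
`τ = T^{(α-β)/2}`. As `g` is `L`-Lipschitz, both parabolic `α`-seminorms of `v` are at most `LP`,
so `v(t,·)` stays within `LP T^{α/2} ≤ LP τ` of `v(0,·)`; this bounds `sup |v|`, and
`|t-s|^{α/2} ≤ τ |t-s|^{β/2}` bounds the time seminorm. For the spatial `β`-seminorm compare
`d = d(x,y)` with the parabolic scale `√T`: below it `d^α ≤ τ d^β`; above it pass through time `0`
and absorb the drift using `T^{α/2} = τ T^{β/2} ≤ τ d^β`. Altogether `‖v‖_{𝒞^β_T} ≤ 2H + 4LPτ`.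
-/

open scoped ENNReal

/-- The `C^1` norm of `g : ℝ → ℝ`: `sup |g| + sup |g'|`. -/
noncomputable def c1Norm (g : ℝ → ℝ) : ℝ≥0∞ :=
  supN g + supN (deriv g)

/-- `‖u‖_{C_T C^α} = sup_{t ∈ [0,T]} ‖u(t,·)‖_{C^α}`. -/
noncomputable def pCTC {X : Type*} [MetricSpace X] (T α : ℝ) (u : ℝ → X → ℝ) : ℝ≥0∞ :=
  ⨆ t ∈ Set.Icc (0 : ℝ) T, hNorm α (u t)

/-- `‖u‖_{C_T^{α/2} L^∞} = sup_{s ≠ t ∈ [0,T]} sup_x |u(t,x) - u(s,x)| / |t-s|^{α/2}`. -/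
noncomputable def pHold {X : Type*} (T α : ℝ) (u : ℝ → X → ℝ) : ℝ≥0∞ :=
  ⨆ (s ∈ Set.Icc (0 : ℝ) T) (t ∈ Set.Icc (0 : ℝ) T) (_ : s ≠ t) (x : X),
    ENNReal.ofReal (|u t x - u s x| / |t - s| ^ (α / 2))

/-- The parabolic Hölder norm `‖u‖_{𝒞^α_T} = ‖u‖_{C_T C^α} + ‖u‖_{C_T^{α/2} L^∞}`. -/
noncomputable def pNorm {X : Type*} [MetricSpace X] (T α : ℝ) (u : ℝ → X → ℝ) : ℝ≥0∞ :=
  pCTC T α u + pHold T α u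

open Set

section HolderNorms

variable {X : Type*} {α T : ℝ} {K : ℝ≥0∞}

lemma abs_le_toReal_of_supN_le {f : X → ℝ} (hK : K ≠ ⊤) (h : supN f ≤ K) (x : X) :
    |f x| ≤ K.toReal :=
  (ENNReal.ofReal_le_iff_le_toReal hK).1 ((le_iSup (fun y => ENNReal.ofReal |f y|) x).trans h)

lemma abs_sub_le_of_hSemi_le [MetricSpace X] {f : X → ℝ} (hK : K ≠ ⊤) (h : hSemi α f ≤ K)
    (x y : X) :
    |f x - f y| ≤ K.toReal * dist x y ^ α := by
  rcases eq_or_ne x y with rfl | hxy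
  · simp only [sub_self, abs_zero]
    positivity
  have hquot : ENNReal.ofReal (|f x - f y| / dist x y ^ α) ≤ K :=
    h.trans' (le_iSup₂_of_le x y (le_iSup_of_le hxy le_rfl))
  exact (div_le_iff₀ (Real.rpow_pos_of_pos (dist_pos.2 hxy) α)).1
    ((ENNReal.ofReal_le_iff_le_toReal hK).1 hquot)

lemma abs_sub_le_of_pHold_le {u : ℝ → X → ℝ} (hK : K ≠ ⊤) (h : pHold T α u ≤ K)
    {s t : ℝ} (hs : s ∈ Icc 0 T) (ht : t ∈ Icc 0 T) (x : X) :
    |u t x - u s x| ≤ K.toReal * |t - s| ^ (α / 2) := by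
  rcases eq_or_ne s t with rfl | hst
  · simp only [sub_self, abs_zero]
    positivity
  have hquot : ENNReal.ofReal (|u t x - u s x| / |t - s| ^ (α / 2)) ≤ K :=
    h.trans' (le_iSup₂_of_le s hs (le_iSup₂_of_le t ht (le_iSup₂_of_le hst x le_rfl)))
  exact (div_le_iff₀ (Real.rpow_pos_of_pos (abs_pos.2 (sub_ne_zero.2 hst.symm)) _)).1
    ((ENNReal.ofReal_le_iff_le_toReal hK).1 hquot)

lemma hSemi_le_pCTC [MetricSpace X] {u : ℝ → X → ℝ} {t : ℝ} (ht : t ∈ Icc 0 T) :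
    hSemi α (u t) ≤ pCTC T α u :=
  le_add_self.trans (le_iSup₂_of_le t ht le_rfl)

lemma supN_le_ofReal {f : X → ℝ} {M : ℝ} (h : ∀ x, |f x| ≤ M) : supN f ≤ ENNReal.ofReal M :=
  iSup_le fun x => ENNReal.ofReal_le_ofReal (h x)

lemma hSemi_le_ofReal [MetricSpace X] {f : X → ℝ} {M : ℝ}
    (h : ∀ x y, x ≠ y → |f x - f y| ≤ M * dist x y ^ α) :
    hSemi α f ≤ ENNReal.ofReal M :=
  iSup₂_le fun x y => iSup_le fun hxy => ENNReal.ofReal_le_ofReal <|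
    (div_le_iff₀ (Real.rpow_pos_of_pos (dist_pos.2 hxy) α)).2 (h x y hxy)

lemma pHold_le_ofReal {u : ℝ → X → ℝ} {M : ℝ}
    (h : ∀ s ∈ Icc 0 T, ∀ t ∈ Icc 0 T, s ≠ t → ∀ x, |u t x - u s x| ≤ M * |t - s| ^ (α / 2)) :
    pHold T α u ≤ ENNReal.ofReal M :=
  iSup₂_le fun s hs => iSup₂_le fun t ht => iSup₂_le fun hst x =>
    ENNReal.ofReal_le_ofReal <|
      (div_le_iff₀ (Real.rpow_pos_of_pos (abs_pos.2 (sub_ne_zero.2 hst.symm)) _)).2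
        (h s hs t ht hst x)

end HolderNorms

lemma abs_sub_le_toReal_supN_deriv_mul {g : ℝ → ℝ} (hg : Differentiable ℝ g)
    (hg' : supN (deriv g) ≠ ⊤) (a b : ℝ) :
    |g a - g b| ≤ (supN (deriv g)).toReal * |a - b| := by
  have hlip : LipschitzWith (supN (deriv g)).toNNReal g :=
    lipschitzWith_of_nnnorm_deriv_le hg fun x => by
      rw [← NNReal.coe_le_coe, coe_nnnorm, ENNReal.coe_toNNReal_eq_toReal]
      exact abs_le_toReal_of_supN_le hg' le_rfl x
  simpa [Real.dist_eq, ENNReal.coe_toNNReal_eq_toReal] using hlip.dist_le_mul a b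

lemma rpow_le_rpow_sub_mul_rpow {r R a b : ℝ} (hr : 0 < r) (hrR : r ≤ R) (hba : b ≤ a) :
    r ^ a ≤ R ^ (a - b) * r ^ b := by
  calc r ^ a = r ^ (a - b) * r ^ b := by rw [← Real.rpow_add hr, sub_add_cancel]
    _ ≤ R ^ (a - b) * r ^ b := by gcongr

lemma le_mul_rpow_of_two_scales {D A B d ρ α β : ℝ} (hd : 0 < d) (hρ : 0 < ρ) (hβ : 0 ≤ β)
    (hβα : β ≤ α) (hA : 0 ≤ A) (hB : 0 ≤ B)
    (hsmall : D ≤ A * d ^ α) (hlarge : D ≤ B * d ^ β + A * ρ ^ α) :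
    D ≤ (B + A * ρ ^ (α - β)) * d ^ β := by
  rcases le_total d ρ with hdρ | hρd
  · calc D ≤ A * (ρ ^ (α - β) * d ^ β) :=
          hsmall.trans (by gcongr; exact rpow_le_rpow_sub_mul_rpow hd hdρ hβα)
      _ ≤ (B + A * ρ ^ (α - β)) * d ^ β := by nlinarith [Real.rpow_nonneg hd.le β]
  · have hρα : ρ ^ α ≤ ρ ^ (α - β) * d ^ β :=
      (rpow_le_rpow_sub_mul_rpow hρ le_rfl hβα).trans (by gcongr)
    calc D ≤ B * d ^ β + A * (ρ ^ (α - β) * d ^ β) := hlarge.trans (by gcongr)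
      _ = (B + A * ρ ^ (α - β)) * d ^ β := by ring

section ParabolicHolder

variable {X : Type*} {T α β A H : ℝ} {v : ℝ → X → ℝ}

lemma abs_sub_initial_le (hα : 0 ≤ α) (hA : 0 ≤ A)
    (htime : ∀ s ∈ Icc 0 T, ∀ t ∈ Icc 0 T, ∀ x, |v t x - v s x| ≤ A * |t - s| ^ (α / 2))
    {t : ℝ} (ht : t ∈ Icc 0 T) (x : X) :
    |v t x - v 0 x| ≤ A * T ^ (α / 2) := by
  have h := htime 0 ⟨le_rfl, ht.1.trans ht.2⟩ t ht x
  rw [sub_zero, abs_of_nonneg ht.1] at h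
  exact h.trans (mul_le_mul_of_nonneg_left (Real.rpow_le_rpow ht.1 ht.2 (by linarith)) hA)

lemma abs_le_of_initial (hT : 0 < T) (hT1 : T ≤ 1) (hβ : 0 ≤ β) (hβα : β ≤ α)
    (hA : 0 ≤ A)
    (htime : ∀ s ∈ Icc 0 T, ∀ t ∈ Icc 0 T, ∀ x, |v t x - v s x| ≤ A * |t - s| ^ (α / 2))
    (hsup0 : ∀ x, |v 0 x| ≤ H) {t : ℝ} (ht : t ∈ Icc 0 T) (x : X) :
    |v t x| ≤ H + A * T ^ ((α - β) / 2) := by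
  have hTα : T ^ (α / 2) ≤ T ^ ((α - β) / 2) :=
    Real.rpow_le_rpow_of_exponent_ge hT hT1 (by linarith)
  have hdrift := abs_sub_initial_le (hβ.trans hβα) hA htime ht x
  linarith [abs_sub_abs_le_abs_sub (v t x) (v 0 x), hsup0 x,
    mul_le_mul_of_nonneg_left hTα hA]

lemma abs_sub_space_le_of_initial [MetricSpace X] (hT : 0 < T) (hβ : 0 ≤ β) (hβα : β ≤ α)
    (hA : 0 ≤ A) (hH : 0 ≤ H) (hspace : ∀ t ∈ Icc 0 T, ∀ x y, |v t x - v t y| ≤ A * dist x y ^ α)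
    (htime : ∀ s ∈ Icc 0 T, ∀ t ∈ Icc 0 T, ∀ x, |v t x - v s x| ≤ A * |t - s| ^ (α / 2))
    (hsemi0 : ∀ x y, |v 0 x - v 0 y| ≤ H * dist x y ^ β) {t : ℝ} (ht : t ∈ Icc 0 T)
    {x y : X} (hxy : x ≠ y) :
    |v t x - v t y| ≤ (H + 2 * A * T ^ ((α - β) / 2)) * dist x y ^ β := by
  have hsqrt : ∀ γ : ℝ, (T ^ (1 / 2 : ℝ)) ^ γ = T ^ (γ / 2) := fun γ => by
    rw [← Real.rpow_mul hT.le]; ring_nf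
  have hsmall : |v t x - v t y| ≤ 2 * A * dist x y ^ α :=
    (hspace t ht x y).trans (by nlinarith [Real.rpow_nonneg (dist_nonneg (x := x) (y := y)) α])
  have hlarge : |v t x - v t y| ≤ H * dist x y ^ β + 2 * A * (T ^ (1 / 2 : ℝ)) ^ α := by
    have hx := abs_sub_initial_le (hβ.trans hβα) hA htime ht x
    have hy := abs_sub_initial_le (hβ.trans hβα) hA htime ht y
    have hxy0 := abs_sub_le (v t x) (v 0 x) (v t y)
    have hxy1 := abs_sub_le (v 0 x) (v 0 y) (v t y)
    rw [abs_sub_comm (v 0 y)] at hxy1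
    rw [hsqrt]
    linarith [hsemi0 x y]
  have := le_mul_rpow_of_two_scales (dist_pos.2 hxy) (Real.rpow_pos_of_pos hT _) hβ hβα
    (by linarith) hH hsmall hlarge
  rwa [hsqrt] at this

lemma abs_sub_time_le (hβα : β ≤ α) (hA : 0 ≤ A)
    (htime : ∀ s ∈ Icc 0 T, ∀ t ∈ Icc 0 T, ∀ x, |v t x - v s x| ≤ A * |t - s| ^ (α / 2))
    {s t : ℝ} (hs : s ∈ Icc 0 T) (ht : t ∈ Icc 0 T) (hst : s ≠ t) (x : X) :
    |v t x - v s x| ≤ A * T ^ ((α - β) / 2) * |t - s| ^ (β / 2) := by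
  have hts : |t - s| ≤ T := abs_sub_le_iff.2 ⟨by linarith [ht.2, hs.1], by linarith [hs.2, ht.1]⟩
  have hsplit := rpow_le_rpow_sub_mul_rpow (abs_pos.2 (sub_ne_zero.2 hst.symm)) hts
    (div_le_div_of_nonneg_right hβα zero_le_two)
  rw [← sub_div] at hsplit
  calc |v t x - v s x| ≤ A * |t - s| ^ (α / 2) := htime s hs t ht x
    _ ≤ A * T ^ ((α - β) / 2) * |t - s| ^ (β / 2) := by rw [mul_assoc]; gcongr

theorem pNorm_le_of_parabolic_holder_bounds [MetricSpace X] (hT : 0 < T) (hT1 : T ≤ 1) (hβ : 0 ≤ β)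
    (hβα : β ≤ α) (hA : 0 ≤ A) (hH : 0 ≤ H)
    (hspace : ∀ t ∈ Icc 0 T, ∀ x y, |v t x - v t y| ≤ A * dist x y ^ α)
    (htime : ∀ s ∈ Icc 0 T, ∀ t ∈ Icc 0 T, ∀ x, |v t x - v s x| ≤ A * |t - s| ^ (α / 2))
    (hsup0 : ∀ x, |v 0 x| ≤ H) (hsemi0 : ∀ x y, |v 0 x - v 0 y| ≤ H * dist x y ^ β) :
    pNorm T β v ≤ ENNReal.ofReal (2 * H + 4 * A * T ^ ((α - β) / 2)) := by
  set τ := T ^ ((α - β) / 2)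
  have hτ : 0 ≤ τ := Real.rpow_nonneg hT.le _
  have hCTC : pCTC T β v ≤ ENNReal.ofReal (H + A * τ) + ENNReal.ofReal (H + 2 * A * τ) :=
    iSup₂_le fun t ht => add_le_add
      (supN_le_ofReal (abs_le_of_initial hT hT1 hβ hβα hA htime hsup0 ht))
      (hSemi_le_ofReal fun x y hxy =>
        abs_sub_space_le_of_initial hT hβ hβα hA hH hspace htime hsemi0 ht hxy)
  have hHold : pHold T β v ≤ ENNReal.ofReal (A * τ) :=
    pHold_le_ofReal fun s hs t ht hst x => abs_sub_time_le hβα hA htime hs ht hst x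
  calc pNorm T β v
      ≤ ENNReal.ofReal (H + A * τ) + ENNReal.ofReal (H + 2 * A * τ) + ENNReal.ofReal (A * τ) :=
        add_le_add hCTC hHold
    _ = ENNReal.ofReal (2 * H + 4 * A * τ) := by
        rw [← ENNReal.ofReal_add (by positivity) (by positivity),
          ← ENNReal.ofReal_add (by positivity) (by positivity)]
        ring_nf

end ParabolicHolder

theorem stmt_2_general (α β : ℝ) (hβ0 : 0 < β) (hβα : β ≤ α) :
    ∃ C : ℝ, 0 < C ∧
      ∀ (X : Type*) [MetricSpace X] (T : ℝ), 0 < T → T ≤ 1 →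
        ∀ g : ℝ → ℝ, Differentiable ℝ g → supN g < ⊤ → supN (deriv g) < ⊤ →
          ∀ u : ℝ → X → ℝ, pNorm T α u < ⊤ →
            pNorm T β (fun t x => g (u t x)) ≤
              ENNReal.ofReal C *
                (ENNReal.ofReal (T ^ ((α - β) / 2)) * c1Norm g * (1 + pNorm T α u)
                  + hNorm β (fun x => g (u 0 x))) := by
  refine ⟨4, by norm_num, fun X _ T hT hT1 g hg _ hg' u hu => ?_⟩
  by_cases hH : hNorm β (fun x => g (u 0 x)) = ⊤
  · simp [hH]
  set L := (supN (deriv g)).toReal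
  set P := (pNorm T α u).toReal
  set H := (hNorm β (fun x => g (u 0 x))).toReal
  set τ := T ^ ((α - β) / 2)
  have hLip := abs_sub_le_toReal_supN_deriv_mul hg hg'.ne
  have hH0 : 0 ≤ H := ENNReal.toReal_nonneg
  have hcomp : pNorm T β (fun t x => g (u t x)) ≤ ENNReal.ofReal (2 * H + 4 * (L * P) * τ) :=
    pNorm_le_of_parabolic_holder_bounds hT hT1 hβ0.le hβα (by positivity) hH0
      (fun t ht x y => (hLip _ _).trans <| by
        rw [mul_assoc]; gcongr
        exact abs_sub_le_of_hSemi_le hu.ne ((hSemi_le_pCTC ht).trans le_self_add) x y)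
      (fun s hs t ht x => (hLip _ _).trans <| by
        rw [mul_assoc]; gcongr
        exact abs_sub_le_of_pHold_le hu.ne le_add_self hs ht x)
      (abs_le_toReal_of_supN_le hH le_self_add)
      (abs_sub_le_of_hSemi_le hH le_add_self)
  calc pNorm T β (fun t x => g (u t x))
      ≤ ENNReal.ofReal (4 * (τ * L * P + H)) :=
        hcomp.trans (ENNReal.ofReal_le_ofReal (by linarith))
    _ = ENNReal.ofReal 4 * (ENNReal.ofReal τ * supN (deriv g) * pNorm T α u
          + hNorm β (fun x => g (u 0 x))) := by
        rw [ENNReal.ofReal_mul (by norm_num), ENNReal.ofReal_add (by positivity) (by positivity),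
          ENNReal.ofReal_mul (by positivity), ENNReal.ofReal_mul (by positivity),
          ENNReal.ofReal_toReal hg'.ne, ENNReal.ofReal_toReal hu.ne, ENNReal.ofReal_toReal hH]
    _ ≤ _ := by gcongr <;> exact le_add_self

theorem stmt_2 (α β : ℝ) (hβ0 : 0 < β) (hβα : β ≤ α) (hα1 : α ≤ 1) :
    ∃ C : ℝ, 0 < C ∧
      ∀ (X : Type*) [MetricSpace X] (T : ℝ), 0 < T → T ≤ 1 →
        ∀ g : ℝ → ℝ, Differentiable ℝ g → supN g < ⊤ → supN (deriv g) < ⊤ →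
          ∀ u : ℝ → X → ℝ, pNorm T α u < ⊤ →
            pNorm T β (fun t x => g (u t x)) ≤
              ENNReal.ofReal C *
                (ENNReal.ofReal (T ^ ((α - β) / 2)) * c1Norm g * (1 + pNorm T α u)
                  + hNorm β (fun x => g (u 0 x))) :=
  stmt_2_general α β hβ0 hβα
end

section
/- Let d ≥ 1, T > 0 and λ > 0. Let a : ℝ → ℝ be continuous with a(r) ≥ λ for all r, let g : ℝ → ℝ and ζ : [0,T] × ℝ^d → ℝ. Let A : ℝ → ℝ be differentiable with A'(r) = 1/a(r) for all r, let b : ℝ → ℝ satisfy b(A(r)) = r for all r ∈ ℝ, and set f := (g/a) ∘ b. Suppose u : [0,T] × ℝ^d → ℝ is differentiable in the time variable and twice differentiable in the space variable and satisfies ∂_t u(t,x) = a(u(t,x)) Δu(t,x) + g(u(t,x)) ζ(t,x) for all (t,x) ∈ (0,T] × ℝ^d, where Δ denotes the spatial Laplacian (the sum of the second partial derivatives in the space variables). Then v := A ∘ u satisfies b(v(t,x)) = u(t,x) for all (t,x), v is differentiable in time, and ∂_t v(t,x) = Δ(b ∘ v)(t,x) + f(v(t,x)) ζ(t,x) for all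 (t,x) ∈ (0,T] × ℝ^d. -/
/-- The spatial Laplacian of `w : (Fin d → ℝ) → ℝ` at `x`: the sum of the second
partial derivatives in each coordinate direction. -/
noncomputable def lap {d : ℕ} (w : (Fin d → ℝ) → ℝ) (x : Fin d → ℝ) : ℝ :=
  ∑ i : Fin d, deriv (deriv fun s : ℝ => w (Function.update x i s)) (x i)

theorem deriv_comp_eq_div_of_deriv_eq_one_div {a A w : ℝ → ℝ} {t : ℝ}
    (hA : DifferentiableAt ℝ A (w t)) (hA' : deriv A (w t) = 1 / a (w t))
    (hw : DifferentiableAt ℝ w t) :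
    deriv (fun τ => A (w τ)) t = deriv w t / a (w t) := by
  rw [← Function.comp_def, deriv_comp t hA hw, hA', one_div_mul_eq_div]

theorem stmt_6_general (d : ℕ) (T lam : ℝ) (hlam : 0 < lam)
    (a g : ℝ → ℝ) (halam : ∀ r : ℝ, lam ≤ a r)
    (ζ : ℝ → (Fin d → ℝ) → ℝ)
    (A : ℝ → ℝ) (hA : Differentiable ℝ A) (hA' : ∀ r : ℝ, deriv A r = 1 / a r)
    (b : ℝ → ℝ) (hb : ∀ r : ℝ, b (A r) = r)
    (f : ℝ → ℝ) (hf : f = fun r => g (b r) / a (b r))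
    (u : ℝ → (Fin d → ℝ) → ℝ)
    (hut : ∀ x, Differentiable ℝ fun t => u t x)
    (heq : ∀ t ∈ Set.Ioc (0 : ℝ) T, ∀ x,
      deriv (fun τ => u τ x) t = a (u t x) * lap (u t) x + g (u t x) * ζ t x)
    (v : ℝ → (Fin d → ℝ) → ℝ) (hv : v = fun t x => A (u t x)) :
    (∀ t x, b (v t x) = u t x) ∧
      (∀ x, Differentiable ℝ fun t => v t x) ∧
        (∀ t ∈ Set.Ioc (0 : ℝ) T, ∀ x,
          deriv (fun τ => v τ x) t = lap (fun y => b (v t y)) x + f (v t x) * ζ t x) := by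
  subst hv hf
  refine ⟨fun t x => hb _, fun x => hA.comp (hut x), fun t ht x => ?_⟩
  have ha_ne : a (u t x) ≠ 0 := (hlam.trans_le (halam _)).ne'
  rw [deriv_comp_eq_div_of_deriv_eq_one_div (hA _) (hA' _) (hut x t), heq t ht x]
  simp only [hb]
  field_simp

theorem stmt_6 (d : ℕ) (hd : 1 ≤ d) (T lam : ℝ) (hT : 0 < T) (hlam : 0 < lam)
    (a g : ℝ → ℝ) (ha : Continuous a) (halam : ∀ r : ℝ, lam ≤ a r)
    (ζ : ℝ → (Fin d → ℝ) → ℝ)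
    (A : ℝ → ℝ) (hA : Differentiable ℝ A) (hA' : ∀ r : ℝ, deriv A r = 1 / a r)
    (b : ℝ → ℝ) (hb : ∀ r : ℝ, b (A r) = r)
    (f : ℝ → ℝ) (hf : f = fun r => g (b r) / a (b r))
    (u : ℝ → (Fin d → ℝ) → ℝ)
    (hut : ∀ x, Differentiable ℝ fun t => u t x)
    (hux : ∀ t, ∀ x : Fin d → ℝ, ∀ i : Fin d,
      Differentiable ℝ (fun s : ℝ => u t (Function.update x i s)) ∧
        Differentiable ℝ (deriv fun s : ℝ => u t (Function.update x i s)))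
    (heq : ∀ t ∈ Set.Ioc (0 : ℝ) T, ∀ x,
      deriv (fun τ => u τ x) t = a (u t x) * lap (u t) x + g (u t x) * ζ t x)
    (v : ℝ → (Fin d → ℝ) → ℝ) (hv : v = fun t x => A (u t x)) :
    (∀ t x, b (v t x) = u t x) ∧
      (∀ x, Differentiable ℝ fun t => v t x) ∧
        (∀ t ∈ Set.Ioc (0 : ℝ) T, ∀ x,
          deriv (fun τ => v τ x) t = lap (fun y => b (v t y)) x + f (v t x) * ζ t x) :=
  stmt_6_general d T lam hlam a g halam ζ A hA hA' b hb f hf u hut heq v hv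
end
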